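/- Let F : ℝ^d → ℝ be C² with F'' ≥ ρ Id (ρ ≠ 0), and let X : [0,T] → ℝ^d solve Ẍ = F''(X)F'(X) with X(0)=x, X(T)=y. Then ∫₀ᵀ (|Ẋ(t)|² + |F'(X(t))|²) dt + 2(F(y) − F(x)) ≥ ((e^{2ρT} − 1)/(2ρ)) |Ẋ(0) + F'(x)|². -/

import Mathlib

/-!
Put `v = Ẋ + ∇F(X)`. Since `∇(‖∇F‖²) = 2 ∇²F ∇F`, Newton's equation says exactly that
`v̇ = ∇²F(X) v`, so `d/dt ‖v‖² = 2 ⟪∇²F(X) v, v⟫ ≥ 2ρ ‖v‖²` and a Grönwall argument gives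
`‖v t‖² ≥ e^{2ρt} ‖v 0‖²`. Integrating over `[0, T]` bounds `∫ ‖v‖²` below by the right-hand side,
while `‖v‖² = ‖Ẋ‖² + ‖∇F(X)‖² + 2 d/dt F(X)` shows that `∫ ‖v‖²` is the left-hand side.
-/

open Real Set InnerProductSpace
open scoped RealInnerProductSpace

section Gradient

variable {E : Type*} [NormedAddCommGroup E] [InnerProductSpace ℝ E] [CompleteSpace E] {F : E → ℝ}

theorem ContDiff.contDiff_gradient {n : WithTop ℕ∞} (hF : ContDiff ℝ (n + 1) F) :
    ContDiff ℝ n (gradient F) :=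
  (toDual ℝ E).symm.contDiff.comp (hF.fderiv_right le_rfl)

theorem inner_fderiv_gradient_apply (z v w : E) :
    ⟪fderiv ℝ (gradient F) z v, w⟫ = fderiv ℝ (fderiv ℝ F) z v w := by
  have : gradient F = (toDual ℝ E).symm ∘ fderiv ℝ F := rfl
  rw [this, LinearIsometryEquiv.comp_fderiv]
  exact toDual_symm_apply

theorem inner_fderiv_gradient_comm {z : E} (hF : ContDiffAt ℝ 2 F z) (v w : E) :
    ⟪fderiv ℝ (gradient F) z v, w⟫ = ⟪fderiv ℝ (gradient F) z w, v⟫ := by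
  rw [inner_fderiv_gradient_apply, inner_fderiv_gradient_apply]
  exact (hF.isSymmSndFDerivAt (by simp)).eq v w

theorem gradient_norm_sq_gradient {z : E} (hF : ContDiffAt ℝ 2 F z) :
    gradient (fun w => ‖gradient F w‖ ^ 2) z
      = (2 : ℝ) • fderiv ℝ (gradient F) z (gradient F z) := by
  have hgrad : DifferentiableAt ℝ (gradient F) z :=
    (toDual ℝ E).symm.differentiableAt.comp z
      ((hF.fderiv_right (m := 1) le_rfl).differentiableAt one_ne_zero)
  refine (hasGradientAt_iff_hasFDerivAt.mpr ?_).gradient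
  refine hgrad.hasFDerivAt.norm_sq.congr_fderiv ?_
  ext w
  simp [inner_fderiv_gradient_comm hF (gradient F z) w]

end Gradient

theorem exp_mul_sub_mul_le_of_mul_le_deriv {φ φ' : ℝ → ℝ} {a b c t : ℝ}
    (hφ : ∀ s ∈ Icc a b, HasDerivAt φ (φ' s) s) (hφ' : ∀ s ∈ Icc a b, c * φ s ≤ φ' s)
    (ht : t ∈ Icc a b) : exp (c * (t - a)) * φ a ≤ φ t := by
  set ψ : ℝ → ℝ := fun s => exp (-(c * (s - a))) * φ s
  have hψ : ∀ s ∈ Icc a b, HasDerivAt ψ (exp (-(c * (s - a))) * (φ' s - c * φ s)) s := by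
    intro s hs
    have hexp : HasDerivAt (fun s => exp (-(c * (s - a)))) (exp (-(c * (s - a))) * -c) s := by
      simpa using (((hasDerivAt_id s).sub_const a).const_mul c).neg.exp
    exact (hexp.mul (hφ s hs)).congr_deriv (by ring)
  have hmono : MonotoneOn ψ (Icc a b) := by
    refine monotoneOn_of_hasDerivWithinAt_nonneg (convex_Icc a b)
      (fun s hs => (hψ s hs).continuousAt.continuousWithinAt)
      (fun s hs => (hψ s (interior_subset hs)).hasDerivWithinAt) fun s hs => ?_
    exact mul_nonneg (exp_pos _).le (sub_nonneg.mpr (hφ' s (interior_subset hs)))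
  have := hmono (left_mem_Icc.mpr (ht.1.trans ht.2)) ht ht.1
  simp only [ψ, sub_self, mul_zero, neg_zero, exp_zero, one_mul] at this
  calc exp (c * (t - a)) * φ a ≤ exp (c * (t - a)) * (exp (-(c * (t - a))) * φ t) :=
        mul_le_mul_of_nonneg_left this (exp_pos _).le
    _ = φ t := by rw [← mul_assoc, ← exp_add, add_neg_cancel, exp_zero, one_mul]

section Curves

variable {E : Type*} [NormedAddCommGroup E] [InnerProductSpace ℝ E]

theorem exp_mul_sub_mul_norm_sq_le_of_mul_le_inner {v v' : ℝ → E} {a b ρ t : ℝ}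
    (hv : ∀ s ∈ Icc a b, HasDerivAt v (v' s) s) (hρ : ∀ s ∈ Icc a b, ρ * ‖v s‖ ^ 2 ≤ ⟪v' s, v s⟫)
    (ht : t ∈ Icc a b) : exp (2 * ρ * (t - a)) * ‖v a‖ ^ 2 ≤ ‖v t‖ ^ 2 := by
  refine exp_mul_sub_mul_le_of_mul_le_deriv (fun s hs => (hv s hs).norm_sq) (fun s hs => ?_) ht
  rw [real_inner_comm, mul_assoc]
  exact mul_le_mul_of_nonneg_left (hρ s hs) zero_le_two

theorem integral_norm_sq_deriv_add_gradient [CompleteSpace E] {F : E → ℝ} {X : ℝ → E}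
    (hF : ContDiff ℝ 1 F) (hX : ContDiff ℝ 1 X) (a b : ℝ) :
    ∫ t in a..b, ‖deriv X t + gradient F (X t)‖ ^ 2
      = (∫ t in a..b, (‖deriv X t‖ ^ 2 + ‖gradient F (X t)‖ ^ 2)) + 2 * (F (X b) - F (X a)) := by
  have hgradX : Continuous fun t => gradient F (X t) :=
    (hF.contDiff_gradient (n := 0)).continuous.comp hX.continuous
  have hX' : Continuous (deriv X) := hX.continuous_deriv_one
  have hFX : ∀ t, HasDerivAt (fun s => F (X s)) ⟪gradient F (X t), deriv X t⟫ t := fun t => by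
    have hFt := ((hF.differentiable one_ne_zero) (X t)).hasGradientAt
    have h := (hasGradientAt_iff_hasFDerivAt.mp hFt).comp_hasDerivAt t
      ((hX.differentiable one_ne_zero) t).hasDerivAt
    rwa [toDual_apply_apply] at h
  have hinner : Continuous fun t => ⟪gradient F (X t), deriv X t⟫ := hgradX.inner hX'
  have hexpand : ∀ t, ‖deriv X t + gradient F (X t)‖ ^ 2
      = (‖deriv X t‖ ^ 2 + ‖gradient F (X t)‖ ^ 2) + 2 * ⟪gradient F (X t), deriv X t⟫ := by
    intro t
    rw [norm_add_sq_real, real_inner_comm]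
    ring
  have hsq : Continuous fun t => ‖deriv X t‖ ^ 2 + ‖gradient F (X t)‖ ^ 2 := by fun_prop
  have hcross : Continuous fun t => 2 * ⟪gradient F (X t), deriv X t⟫ := by fun_prop
  simp_rw [hexpand]
  rw [intervalIntegral.integral_add (hsq.intervalIntegrable a b) (hcross.intervalIntegrable a b),
    intervalIntegral.integral_const_mul,
    intervalIntegral.integral_eq_sub_of_hasDerivAt (fun t _ => hFX t)
      (hinner.intervalIntegrable a b)]

theorem hasDerivAt_deriv_add_gradient_comp [CompleteSpace E] {F : E → ℝ} {X : ℝ → E} {t : ℝ}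
    (hF : ContDiff ℝ 2 F) (hX : ContDiff ℝ 2 X)
    (hNewton : deriv (deriv X) t = (1 / 2 : ℝ) • gradient (fun z => ‖gradient F z‖ ^ 2) (X t)) :
    HasDerivAt (fun s => deriv X s + gradient F (X s))
      (fderiv ℝ (gradient F) (X t) (deriv X t + gradient F (X t))) t := by
  have hX' : Differentiable ℝ (deriv X) := (hX.deriv' (n := 1)).differentiable one_ne_zero
  have hgrad : Differentiable ℝ (gradient F) :=
    (hF.contDiff_gradient (n := 1)).differentiable one_ne_zero
  have h := (hX' t).hasDerivAt.add
    ((hgrad (X t)).hasFDerivAt.comp_hasDerivAt t (hX.differentiable two_ne_zero t).hasDerivAt)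
  rw [hNewton, gradient_norm_sq_gradient hF.contDiffAt, smul_smul] at h
  refine h.congr_deriv ?_
  norm_num [add_comm]

end Curves

theorem integral_exp_mul {c : ℝ} (hc : c ≠ 0) (a b : ℝ) :
    ∫ t in a..b, exp (c * t) = (exp (c * b) - exp (c * a)) / c := by
  rw [intervalIntegral.integral_comp_mul_left (fun t => exp t) hc, integral_exp, smul_eq_mul,
    inv_mul_eq_div]

theorem stmt_11 (d : ℕ) (T ρ : ℝ) (hT : 0 < T) (hρ : ρ ≠ 0)
    (F : EuclideanSpace ℝ (Fin d) → ℝ) (hF : ContDiff ℝ 2 F)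
    (hconv : ∀ x v : EuclideanSpace ℝ (Fin d),
      ρ * ‖v‖ ^ 2 ≤ ⟪fderiv ℝ (gradient F) x v, v⟫)
    (X : ℝ → EuclideanSpace ℝ (Fin d)) (hX : ContDiff ℝ 2 X)
    (x y : EuclideanSpace ℝ (Fin d)) (hx : X 0 = x) (hy : X T = y)
    (hNewton : ∀ t ∈ Icc (0:ℝ) T,
      deriv (deriv X) t = (1/2 : ℝ) • gradient (fun z => ‖gradient F z‖ ^ 2) (X t)) :
    (∫ t in (0:ℝ)..T, (‖deriv X t‖ ^ 2 + ‖gradient F (X t)‖ ^ 2)) + 2 * (F y - F x)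
      ≥ ((Real.exp (2 * ρ * T) - 1) / (2 * ρ)) * ‖deriv X 0 + gradient F x‖ ^ 2 := by
  set v : ℝ → EuclideanSpace ℝ (Fin d) := fun t => deriv X t + gradient F (X t)
  have hv : ∀ t ∈ Icc 0 T, HasDerivAt v (fderiv ℝ (gradient F) (X t) (v t)) t :=
    fun t ht => hasDerivAt_deriv_add_gradient_comp hF hX (hNewton t ht)
  have hgrowth : ∀ t ∈ Icc 0 T, exp (2 * ρ * t) * ‖v 0‖ ^ 2 ≤ ‖v t‖ ^ 2 := fun t ht => by
    simpa using exp_mul_sub_mul_norm_sq_le_of_mul_le_inner hv (fun s _ => hconv (X s) (v s)) ht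
  have hexpc : Continuous fun t => exp (2 * ρ * t) * ‖v 0‖ ^ 2 := by fun_prop
  have hvc : Continuous fun t => ‖v t‖ ^ 2 :=
    ((hX.continuous_deriv one_le_two).add
      ((hF.contDiff_gradient (n := 1)).continuous.comp hX.continuous)).norm.pow 2
  rw [ge_iff_le]
  calc ((exp (2 * ρ * T) - 1) / (2 * ρ)) * ‖deriv X 0 + gradient F x‖ ^ 2
      = ∫ t in (0:ℝ)..T, exp (2 * ρ * t) * ‖v 0‖ ^ 2 := by
        rw [intervalIntegral.integral_mul_const, integral_exp_mul (mul_ne_zero two_ne_zero hρ),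
          mul_zero, exp_zero, ← hx]
    _ ≤ ∫ t in (0:ℝ)..T, ‖v t‖ ^ 2 :=
        intervalIntegral.integral_mono_on hT.le (hexpc.intervalIntegrable 0 T)
          (hvc.intervalIntegrable 0 T) hgrowth
    _ = _ := by
        rw [integral_norm_sq_deriv_add_gradient (hF.of_le one_le_two) (hX.of_le one_le_two), hx, hy]
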